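/- Let X be a Banach space with a family (x_i)_{i∈I} in X and biorthogonal functionals (x_i^*)_{i∈I} in X* (x_i^*(x_j) = 1 if i = j and 0 otherwise), such that every f ∈ X* belongs to the weak-*-closed linear span of {x_i^* : i ∈ supp(f)}, where supp(f) = {i ∈ I : f(x_i) ≠ 0}. Let E ⊂ X* be norm-bounded and suppose there is a finite cardinal m such that card(supp(f)) = m for all f ∈ E. Then E is w*-LRC. -/

import Mathlib

open NormedSpace Filter Set Topology Pointwise Classical

/-!
Around `y ∈ E` take the weak-* open set `U = {g | g (x i) ≠ 0 for all i ∈ supp y}`. For `f ∈ E ∩ U`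
we get `supp y ⊆ supp f`, hence equality since both have `m` elements; so `f` lies in the weak-*
closure of the finite-dimensional space `span {xs i | i ∈ supp y}`, which is weak-* closed.
Thus `E ∩ U` is a bounded subset of a fixed finite-dimensional subspace, and its norm closure is
compact.
-/

noncomputable section

/-- `E ⊆ X*` is weak-* locally relatively norm-compact. -/
def IsWeakStarLRC {X : Type*} [NormedAddCommGroup X] [NormedSpace ℝ X]
    (E : Set (StrongDual ℝ X)) : Prop :=
  ∀ y ∈ E, ∃ U : Set (WeakDual ℝ X), IsOpen U ∧ StrongDual.toWeakDual y ∈ U ∧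
    IsCompact (closure (E ∩ (fun f : StrongDual ℝ X => StrongDual.toWeakDual f) ⁻¹' U))

theorem WeakDual.isOpen_setOf_forall_apply_ne_zero {𝕜 X I : Type*} [NormedField 𝕜]
    [NormedAddCommGroup X] [NormedSpace 𝕜 X] (x : I → X) {S : Set I} (hS : S.Finite) :
    IsOpen {g : WeakDual 𝕜 X | ∀ i ∈ S, g (x i) ≠ 0} := by
  simp only [ofPred_forall]
  exact hS.isOpen_biInter fun i _ =>
    isOpen_compl_singleton.preimage (WeakDual.eval_continuous (x i))

theorem StrongDual.mem_of_toWeakDual_mem_closure {𝕜 X : Type*} [NontriviallyNormedField 𝕜]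
    [CompleteSpace 𝕜] [NormedAddCommGroup X] [NormedSpace 𝕜 X]
    (V : Submodule 𝕜 (StrongDual 𝕜 X)) [FiniteDimensional 𝕜 V] {f : StrongDual 𝕜 X}
    (hf : StrongDual.toWeakDual f ∈ closure (StrongDual.toWeakDual '' (V : Set (StrongDual 𝕜 X)))) :
    f ∈ V := by
  let W : Submodule 𝕜 (WeakDual 𝕜 X) := V.map (StrongDual.toWeakDual : _ ≃ₗ[𝕜] _).toLinearMap
  have hW : (W : Set (WeakDual 𝕜 X)) = StrongDual.toWeakDual '' (V : Set (StrongDual 𝕜 X)) :=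
    Submodule.map_coe _ _
  rw [← hW, W.closed_of_finiteDimensional.closure_eq, hW] at hf
  obtain ⟨g, hgV, hgf⟩ := hf
  rwa [← StrongDual.toWeakDual.injective hgf]

theorem Submodule.isCompact_closure_of_isBounded_of_subset {𝕜 F : Type*}
    [RCLike 𝕜] [NormedAddCommGroup F] [NormedSpace 𝕜 F]
    (V : Submodule 𝕜 F) [FiniteDimensional 𝕜 V] {A : Set F} (hA : Bornology.IsBounded A)
    (hAV : A ⊆ V) : IsCompact (closure A) := by
  have : ProperSpace V := FiniteDimensional.proper 𝕜 V
  have hclV : closure A ⊆ V := closure_minimal hAV V.closed_of_finiteDimensional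
  rw [← image_preimage_eq_of_subset (f := ((↑) : V → F)) (s := closure A) (by simpa using hclV)]
  refine Subtype.isCompact_iff.mp (Metric.isCompact_of_isClosed_isBounded
    (isClosed_closure.preimage continuous_subtype_val) ?_)
  exact isometry_subtype_coe.antilipschitz.isBounded_preimage hA.closure

theorem stmt12_general {X I : Type*} [NormedAddCommGroup X] [NormedSpace ℝ X]
    (x : I → X) (xs : I → StrongDual ℝ X)
    (hstrong : ∀ f : StrongDual ℝ X, StrongDual.toWeakDual f ∈
      closure ((fun g : StrongDual ℝ X => StrongDual.toWeakDual g) ''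
        (Submodule.span ℝ (xs '' {i : I | f (x i) ≠ 0}) : Set (StrongDual ℝ X))))
    (E : Set (StrongDual ℝ X)) (hEbdd : Bornology.IsBounded E)
    (m : ℕ)
    (hcard : ∀ f ∈ E, {i : I | f (x i) ≠ 0}.Finite ∧ {i : I | f (x i) ≠ 0}.ncard = m) :
    IsWeakStarLRC E := by
  intro y hy
  obtain ⟨hSfin, hScard⟩ := hcard y hy
  set S : Set I := {i | y (x i) ≠ 0}
  have : FiniteDimensional ℝ (Submodule.span ℝ (xs '' S)) :=
    FiniteDimensional.span_of_finite ℝ (hSfin.image xs)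
  refine ⟨{g | ∀ i ∈ S, g (x i) ≠ 0}, WeakDual.isOpen_setOf_forall_apply_ne_zero x hSfin,
    fun i hi => hi, ?_⟩
  refine (Submodule.span ℝ (xs '' S)).isCompact_closure_of_isBounded_of_subset
    (hEbdd.subset inter_subset_left) ?_
  rintro f ⟨hfE, hfU⟩
  obtain ⟨hffin, hfcard⟩ := hcard f hfE
  have hsupp : S = {i | f (x i) ≠ 0} := eq_of_subset_of_ncard_le hfU (by rw [hfcard, hScard]) hffin
  exact StrongDual.mem_of_toWeakDual_mem_closure _ (hsupp ▸ hstrong f)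

theorem stmt12 {X I : Type*} [NormedAddCommGroup X] [NormedSpace ℝ X] [CompleteSpace X]
    (x : I → X) (xs : I → StrongDual ℝ X)
    (hbi : ∀ i j, xs i (x j) = if i = j then 1 else 0)
    (hstrong : ∀ f : StrongDual ℝ X, StrongDual.toWeakDual f ∈
      closure ((fun g : StrongDual ℝ X => StrongDual.toWeakDual g) ''
        (Submodule.span ℝ (xs '' {i : I | f (x i) ≠ 0}) : Set (StrongDual ℝ X))))
    (E : Set (StrongDual ℝ X)) (hEbdd : Bornology.IsBounded E)
    (m : ℕ)
    (hcard : ∀ f ∈ E, {i : I | f (x i) ≠ 0}.Finite ∧ {i : I | f (x i) ≠ 0}.ncard = m) :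
    IsWeakStarLRC E :=
  stmt12_general x xs hstrong E hEbdd m hcard

end
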